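/- For every probability distribution F on [0,1], every positive integer m, and every real p ≥ 1, the L_p distance between the binomial mixture CDF and F satisfies (∫_0^1 |F^{(m)}(x) − F(x)|^p dx)^{1/p} ≤ (2π)^{1/(2p)} / (mp)^{1/(2p)}. -/

import Mathlib

open MeasureTheory ProbabilityTheory Real

noncomputable section

/-- pmf of Binomial(m, s) at k. -/
def binomPMFr (m k : ℕ) (s : ℝ) : ℝ := (m.choose k : ℝ) * s ^ k * (1 - s) ^ (m - k)

/-- Law of ŝ = X/m where X ~ Binomial(m, s). -/
def binomLaw (m : ℕ) (s : ℝ) : Measure ℝ :=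
  ∑ k ∈ Finset.range (m + 1), ENNReal.ofReal (binomPMFr m k s) • Measure.dirac ((k : ℝ) / m)

/-- Binomial-mixture law of ŝ where s ~ μ. -/
def mixLaw (μ : Measure ℝ) (m : ℕ) : Measure ℝ := μ.bind (binomLaw m)

/-- CDF of a measure. -/
def cdfOf (μ : Measure ℝ) (x : ℝ) : ℝ := (μ (Set.Iic x)).toReal

/-!
Write `F^{(m)}(x) - F(x) = ∫ (P(ŝ ≤ x | s) - 1{s ≤ x}) dF(s)`. Hoeffding's inequality for the
binomial bounds the integrand by `exp (-2m(x - s)²)`, so by Jensen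
`|F^{(m)}(x) - F(x)|^p ≤ ∫ exp (-2mp(x - s)²) dF(s)`. Integrating over `x` and exchanging the
integrals (Tonelli and translation invariance of Lebesgue measure), the `p`-th power of the `L_p`
distance is at most the Gaussian integral `√(π / (2mp)) ≤ √(2π / (mp))`.
-/

open Finset

def bernoulliLaw (s : ℝ) : Measure ℝ :=
  ENNReal.ofReal (1 - s) • Measure.dirac 0 + ENNReal.ofReal s • Measure.dirac 1

section bernoulliLaw

variable {s : ℝ}

lemma isProbabilityMeasure_bernoulliLaw (hs : s ∈ Set.Icc (0:ℝ) 1) :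
    IsProbabilityMeasure (bernoulliLaw s) :=
  ⟨by simp [bernoulliLaw, ← ENNReal.ofReal_add, hs.1, hs.2]⟩

lemma ae_mem_Icc_bernoulliLaw : ∀ᵐ x ∂bernoulliLaw s, x ∈ Set.Icc (0:ℝ) 1 :=
  ae_add_measure_iff.2 ⟨Measure.ae_smul_measure (by simp [ae_dirac_eq]) _,
    Measure.ae_smul_measure (by simp [ae_dirac_eq]) _⟩

lemma integral_bernoulliLaw (hs : s ∈ Set.Icc (0:ℝ) 1) (f : ℝ → ℝ) :
    ∫ x, f x ∂bernoulliLaw s = (1 - s) * f 0 + s * f 1 := by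
  rw [bernoulliLaw,
    integral_add_measure ((integrable_dirac enorm_lt_top).smul_measure ENNReal.ofReal_ne_top)
      ((integrable_dirac enorm_lt_top).smul_measure ENNReal.ofReal_ne_top)]
  simp [hs.1, hs.2]

/-- Hoeffding's lemma for a Bernoulli(`s`) variable, multiplied through by `exp (s * t)`. -/
lemma one_sub_add_mul_exp_le (hs : s ∈ Set.Icc (0:ℝ) 1) (t : ℝ) :
    1 - s + s * exp t ≤ exp (s * t + t ^ 2 / 8) := by
  have := isProbabilityMeasure_bernoulliLaw hs
  have hoeffding : (1 - s) * exp (-(t * s)) + s * exp (t * (1 - s)) ≤ exp (t ^ 2 / 8) := by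
    have := (hasSubgaussianMGF_of_mem_Icc aemeasurable_id
      (ae_mem_Icc_bernoulliLaw (s := s))).mgf_le t
    simp only [mgf, integral_bernoulliLaw hs, id] at this
    norm_num at this
    exact this.trans_eq (by congr 1; ring)
  have e1 : exp (s * t) * exp (-(t * s)) = 1 := by rw [← exp_add]; simp [mul_comm]
  have e2 : exp (s * t) * exp (t * (1 - s)) = exp t := by rw [← exp_add]; congr 1; ring
  calc 1 - s + s * exp t = exp (s * t) * ((1 - s) * exp (-(t * s)) + s * exp (t * (1 - s))) := by
        linear_combination (1 - s) * e1.symm + s * e2.symm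
    _ ≤ exp (s * t) * exp (t ^ 2 / 8) := by gcongr
    _ = exp (s * t + t ^ 2 / 8) := (exp_add _ _).symm

end bernoulliLaw

section binomPMFr

variable {m : ℕ} {s : ℝ}

lemma binomPMFr_nonneg {k : ℕ} (hs : s ∈ Set.Icc (0:ℝ) 1) : 0 ≤ binomPMFr m k s := by
  have h0 := hs.1
  have h1 : 0 ≤ 1 - s := sub_nonneg.2 hs.2
  unfold binomPMFr
  positivity

lemma sum_binomPMFr_mul_pow (m : ℕ) (s y : ℝ) :
    ∑ k ∈ range (m + 1), binomPMFr m k s * y ^ k = (s * y + (1 - s)) ^ m := by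
  rw [add_pow]
  refine sum_congr rfl fun k _ => ?_
  rw [binomPMFr, mul_pow]
  ring

lemma sum_binomPMFr (m : ℕ) (s : ℝ) : ∑ k ∈ range (m + 1), binomPMFr m k s = 1 := by
  simpa using sum_binomPMFr_mul_pow m s 1

/-- Chernoff's bound with the exponent `t = 4 (x - s)` that minimises `t (s - x) + t² / 8`. -/
lemma sum_filter_binomPMFr_le_exp (hs : s ∈ Set.Icc (0:ℝ) 1) (x : ℝ) (P : ℕ → Prop)
    [DecidablePred P] (hP : ∀ k, P k → 0 ≤ (x - s) * (k - m * x)) :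
    ∑ k ∈ range (m + 1) with P k, binomPMFr m k s ≤ exp (-(2 * m * (x - s) ^ 2)) := by
  set t := 4 * (x - s) with ht
  calc ∑ k ∈ range (m + 1) with P k, binomPMFr m k s
      ≤ ∑ k ∈ range (m + 1), binomPMFr m k s * exp (t * (k - m * x)) := by
        rw [sum_filter]
        refine sum_le_sum fun k _ => ?_
        have := binomPMFr_nonneg (m := m) (k := k) hs
        split_ifs with hk
        · exact le_mul_of_one_le_right this
            (one_le_exp (by rw [ht, mul_assoc]; exact mul_nonneg (by norm_num) (hP k hk)))
        · positivity
    _ = exp (-(t * m * x)) * (1 - s + s * exp t) ^ m := by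
        rw [add_comm (1 - s), ← sum_binomPMFr_mul_pow, mul_sum]
        refine sum_congr rfl fun k _ => ?_
        rw [← exp_nat_mul, mul_left_comm, ← exp_add]
        ring_nf
    _ ≤ exp (-(t * m * x)) * exp (s * t + t ^ 2 / 8) ^ m := by
        have hmgf := one_sub_add_mul_exp_le hs t
        have hmgf0 : 0 ≤ 1 - s + s * exp t :=
          add_nonneg (sub_nonneg.2 hs.2) (mul_nonneg hs.1 (exp_pos t).le)
        gcongr
    _ = exp (-(2 * m * (x - s) ^ 2)) := by
        rw [← exp_nat_mul, ← exp_add, ht]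
        ring_nf

end binomPMFr

def binomCDF (m : ℕ) (s x : ℝ) : ℝ := ∑ k ∈ range (m + 1) with ((k : ℕ) : ℝ) / m ≤ x, binomPMFr m k s

section binomCDF

variable {m : ℕ} {s : ℝ}

lemma binomCDF_nonneg (hs : s ∈ Set.Icc (0:ℝ) 1) (x : ℝ) : 0 ≤ binomCDF m s x :=
  sum_nonneg fun _ _ => binomPMFr_nonneg hs

lemma one_sub_binomCDF (x : ℝ) :
    1 - binomCDF m s x = ∑ k ∈ range (m + 1) with ¬ ((k : ℕ) : ℝ) / m ≤ x, binomPMFr m k s := by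
  rw [← sum_binomPMFr m s, ← sum_filter_add_sum_filter_not _ (fun k : ℕ => (k : ℝ) / m ≤ x),
    binomCDF, add_sub_cancel_left]

lemma binomCDF_le_one (hs : s ∈ Set.Icc (0:ℝ) 1) (x : ℝ) : binomCDF m s x ≤ 1 :=
  sub_nonneg.1 <| one_sub_binomCDF (s := s) x ▸ sum_nonneg fun _ _ => binomPMFr_nonneg hs

lemma abs_binomCDF_sub_indicator_le (hm : 0 < m) (hs : s ∈ Set.Icc (0:ℝ) 1) (x : ℝ) :
    |binomCDF m s x - (Set.Iic x).indicator 1 s| ≤ exp (-(2 * m * (x - s) ^ 2)) := by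
  have hm' : (0:ℝ) < m := by exact_mod_cast hm
  by_cases hsx : s ≤ x
  · rw [Set.indicator_of_mem (Set.mem_Iic.2 hsx), Pi.one_apply, abs_sub_comm,
      abs_of_nonneg (sub_nonneg.2 (binomCDF_le_one hs x)), one_sub_binomCDF]
    refine sum_filter_binomPMFr_le_exp hs x _ fun k hk => mul_nonneg (sub_nonneg.2 hsx) ?_
    rw [not_le, lt_div_iff₀ hm'] at hk
    linarith
  · rw [Set.indicator_of_notMem (mt Set.mem_Iic.1 hsx), sub_zero,
      abs_of_nonneg (binomCDF_nonneg hs x)]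
    refine sum_filter_binomPMFr_le_exp hs x _ fun k hk => mul_nonneg_of_nonpos_of_nonpos ?_ ?_
    · linarith [not_le.1 hsx]
    · rw [div_le_iff₀ hm'] at hk
      linarith

end binomCDF

lemma continuous_binomCDF (m : ℕ) (x : ℝ) : Continuous fun s => binomCDF m s x := by
  unfold binomCDF binomPMFr
  fun_prop

lemma measurable_binomLaw (m : ℕ) : Measurable (binomLaw m) := by
  refine Measure.measurable_of_measurable_coe _ fun A _ => ?_
  simp only [binomLaw, Measure.finsetSum_apply, Measure.smul_apply, smul_eq_mul]
  refine Finset.measurable_sum _ fun k _ => Measurable.mul_const ?_ _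
  exact ENNReal.measurable_ofReal.comp (by unfold binomPMFr; fun_prop)

lemma binomLaw_Iic {m : ℕ} {s : ℝ} (hs : s ∈ Set.Icc (0:ℝ) 1) (x : ℝ) :
    binomLaw m s (Set.Iic x) = ENNReal.ofReal (binomCDF m s x) := by
  rw [binomCDF, sum_filter, ENNReal.ofReal_sum_of_nonneg fun k _ => by
    split_ifs <;> simp [binomPMFr_nonneg hs], binomLaw, Measure.finsetSum_apply]
  refine sum_congr rfl fun k _ => ?_
  rw [Measure.smul_apply, Measure.dirac_apply' _ measurableSet_Iic, smul_eq_mul]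
  split_ifs with h <;> simp [h]

section mixLaw

variable {μ : Measure ℝ}

lemma cdfOf_eq_integral_indicator (x : ℝ) : cdfOf μ x = ∫ s, (Set.Iic x).indicator 1 s ∂μ := by
  rw [integral_indicator_one measurableSet_Iic, cdfOf, measureReal_def]

lemma cdfOf_mixLaw (hμ : ∀ᵐ s ∂μ, s ∈ Set.Icc (0:ℝ) 1) (m : ℕ) (x : ℝ) :
    cdfOf (mixLaw μ m) x = ∫ s, binomCDF m s x ∂μ := by
  have h0 : 0 ≤ᵐ[μ] fun s => binomCDF m s x := hμ.mono fun s hs => binomCDF_nonneg hs x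
  rw [cdfOf, mixLaw, Measure.bind_apply measurableSet_Iic (measurable_binomLaw m).aemeasurable,
    integral_eq_lintegral_of_nonneg_ae h0 (continuous_binomCDF m x).aestronglyMeasurable]
  exact congrArg _ (lintegral_congr_ae (hμ.mono fun s hs => binomLaw_Iic hs x))

lemma cdfOf_mixLaw_sub_cdfOf [IsFiniteMeasure μ] (hμ : ∀ᵐ s ∂μ, s ∈ Set.Icc (0:ℝ) 1) (m : ℕ)
    (x : ℝ) :
    cdfOf (mixLaw μ m) x - cdfOf μ x = ∫ s, (binomCDF m s x - (Set.Iic x).indicator 1 s) ∂μ := by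
  have hF : Integrable (fun s => binomCDF m s x) μ :=
    .of_bound (continuous_binomCDF m x).aestronglyMeasurable 1 <| hμ.mono fun s hs => by
      rw [norm_of_nonneg (binomCDF_nonneg hs x)]
      exact binomCDF_le_one hs x
  rw [cdfOf_mixLaw hμ, cdfOf_eq_integral_indicator]
  exact (integral_sub hF ((integrable_const 1).indicator measurableSet_Iic)).symm

end mixLaw

lemma abs_integral_rpow_le {α : Type*} [MeasurableSpace α] {μ : Measure α}
    [IsProbabilityMeasure μ] {f φ : α → ℝ} {p : ℝ} (hp : 1 ≤ p) (hφ : Integrable φ μ)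
    (hφp : Integrable (fun a => φ a ^ p) μ) (hfφ : ∀ᵐ a ∂μ, |f a| ≤ φ a) :
    |∫ a, f a ∂μ| ^ p ≤ ∫ a, φ a ^ p ∂μ :=
  calc |∫ a, f a ∂μ| ^ p ≤ (∫ a, φ a ∂μ) ^ p :=
        rpow_le_rpow (abs_nonneg _) (norm_integral_le_of_norm_le (f := f) hφ hfφ) (by linarith)
    _ ≤ ∫ a, φ a ^ p ∂μ :=
        (convexOn_rpow hp).map_integral_le
          (continuousOn_id.rpow_const fun _ _ => Or.inr (by linarith))
          isClosed_Ici (hfφ.mono fun _ h => (abs_nonneg _).trans h) hφ hφp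

lemma integrable_exp_neg_mul_sub_sq {μ : Measure ℝ} [IsFiniteMeasure μ] {c : ℝ} (hc : 0 ≤ c)
    (x : ℝ) : Integrable (fun s => exp (-c * (x - s) ^ 2)) μ :=
  .of_bound (by fun_prop) 1 <| .of_forall fun s => by
    rw [norm_of_nonneg (exp_pos _).le, exp_le_one_iff]
    nlinarith [sq_nonneg (x - s)]

lemma ofReal_integral_le_lintegral_ofReal {α : Type*} [MeasurableSpace α] {μ : Measure α}
    {f : α → ℝ} (hf : ∀ a, 0 ≤ f a) :
    ENNReal.ofReal (∫ a, f a ∂μ) ≤ ∫⁻ a, ENNReal.ofReal (f a) ∂μ :=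
  calc ENNReal.ofReal (∫ a, f a ∂μ) = ‖∫ a, f a ∂μ‖ₑ := by
        rw [enorm_eq_ofReal_abs, abs_of_nonneg (integral_nonneg hf)]
    _ ≤ ∫⁻ a, ‖f a‖ₑ ∂μ := enorm_integral_le_lintegral_enorm f
    _ = ∫⁻ a, ENNReal.ofReal (f a) ∂μ := by simp_rw [enorm_eq_ofReal_abs, abs_of_nonneg (hf _)]

lemma setIntegral_le_integral_of_le_integral_sub {μ : Measure ℝ} [IsProbabilityMeasure μ]
    {h G : ℝ → ℝ} (S : Set ℝ) (hh : ∀ x, 0 ≤ h x) (hG : Integrable G) (hGm : Measurable G)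
    (hG0 : ∀ y, 0 ≤ G y) (hhG : ∀ x, h x ≤ ∫ s, G (x - s) ∂μ) :
    ∫ x in S, h x ≤ ∫ y, G y := by
  refine (ENNReal.ofReal_le_ofReal_iff (integral_nonneg hG0)).1 ?_
  calc ENNReal.ofReal (∫ x in S, h x) ≤ ∫⁻ x in S, ENNReal.ofReal (h x) :=
        ofReal_integral_le_lintegral_ofReal hh
    _ ≤ ∫⁻ x, ENNReal.ofReal (h x) := setLIntegral_le_lintegral _ _
    _ ≤ ∫⁻ x, ∫⁻ s, ENNReal.ofReal (G (x - s)) ∂μ := lintegral_mono fun x =>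
        (ENNReal.ofReal_le_ofReal (hhG x)).trans (ofReal_integral_le_lintegral_ofReal fun _ => hG0 _)
    _ = ∫⁻ s, (∫⁻ x, ENNReal.ofReal (G (x - s))) ∂μ :=
        lintegral_lintegral_swap
          (hGm.comp (measurable_fst.sub measurable_snd)).ennreal_ofReal.aemeasurable
    _ = ∫⁻ _, (∫⁻ y, ENNReal.ofReal (G y)) ∂μ :=
        lintegral_congr fun s => lintegral_sub_right_eq_self (fun y => ENNReal.ofReal (G y)) s
    _ = ∫⁻ y, ENNReal.ofReal (G y) := by rw [lintegral_const, measure_univ, mul_one]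
    _ = ENNReal.ofReal (∫ y, G y) := (ofReal_integral_eq_lintegral_ofReal hG (.of_forall hG0)).symm

lemma abs_cdfOf_mixLaw_sub_cdfOf_rpow_le {μ : Measure ℝ} [IsProbabilityMeasure μ]
    (hμ : ∀ᵐ s ∂μ, s ∈ Set.Icc (0:ℝ) 1) {m : ℕ} (hm : 0 < m) {p : ℝ} (hp : 1 ≤ p) (x : ℝ) :
    |cdfOf (mixLaw μ m) x - cdfOf μ x| ^ p ≤ ∫ s, exp (-(2 * m * p) * (x - s) ^ 2) ∂μ := by
  have hφp : (fun s => exp (-(2 * m) * (x - s) ^ 2) ^ p)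
      = fun s => exp (-(2 * m * p) * (x - s) ^ 2) := by
    funext s
    rw [← exp_mul]
    ring_nf
  rw [cdfOf_mixLaw_sub_cdfOf hμ, ← hφp]
  refine abs_integral_rpow_le hp (integrable_exp_neg_mul_sub_sq (by positivity) x)
    (hφp ▸ integrable_exp_neg_mul_sub_sq (by positivity) x) (hμ.mono fun s hs => ?_)
  simpa only [neg_mul] using abs_binomCDF_sub_indicator_le hm hs x

/-- For every probability distribution `F` on `[0,1]`, every positive integer `m`,
and every real `p ≥ 1`, the `L_p` distance between the binomial-mixture CDF `F^{(m)}` and `F`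
satisfies `(∫₀¹ |F^{(m)}(x) − F(x)|^p dx)^{1/p} ≤ (2π)^{1/(2p)} / (mp)^{1/(2p)}`. -/
theorem stmt0 (μ : Measure ℝ) [IsProbabilityMeasure μ] (hsupp : μ (Set.Icc (0:ℝ) 1)ᶜ = 0)
    (m : ℕ) (hm : 1 ≤ m) (p : ℝ) (hp : 1 ≤ p) :
    (∫ x in Set.Icc (0:ℝ) 1, |cdfOf (mixLaw μ m) x - cdfOf μ x| ^ p) ^ (1 / p)
      ≤ (2 * π) ^ (1 / (2 * p)) / (((m : ℝ) * p) ^ (1 / (2 * p))) := by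
  have hp0 : 0 < p := by linarith
  have hm0 : (0:ℝ) < m := by exact_mod_cast hm
  have hL : ∫ x in Set.Icc (0:ℝ) 1, |cdfOf (mixLaw μ m) x - cdfOf μ x| ^ p
      ≤ √(π / (2 * m * p)) := by
    rw [← integral_gaussian]
    exact setIntegral_le_integral_of_le_integral_sub _ (fun x => by positivity)
      (integrable_exp_neg_mul_sq (by positivity)) (by fun_prop) (fun y => (exp_pos _).le)
      (abs_cdfOf_mixLaw_sub_cdfOf_rpow_le (ae_iff.2 hsupp) hm hp)
  calc _ ≤ √(π / (2 * m * p)) ^ (1 / p) :=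
        rpow_le_rpow (integral_nonneg fun x => by positivity) hL (by positivity)
    _ ≤ √(2 * π / (m * p)) ^ (1 / p) := by
        gcongr <;> linarith [pi_pos]
    _ = (2 * π) ^ (1 / (2 * p)) / (((m : ℝ) * p) ^ (1 / (2 * p))) := by
        rw [sqrt_eq_rpow, ← rpow_mul (by positivity), div_rpow (by positivity) (by positivity)]
        ring_nf
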